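/- Let A be a commutative ring, M a group, Λ a commutative group, π : M → Λ a group homomorphism, and R = A[Λ] the group algebra of Λ over A. Let σ₀ be a module over the group algebra A[M] that is finitely generated as an A[M]-module, and let σ be the R[M]-module whose underlying R-module is σ₀ ⊗_A R and on which m ∈ M acts by m·(v ⊗ x) = (m·v) ⊗ ((π m)·x), where (π m) is viewed as an element of R. Then the natural map End_{A[M]}(σ₀) ⊗_A R → End_{R[M]}(σ), sending ψ ⊗ y to the endomorphism determined by v ⊗ x ↦ ψ(v) ⊗ y·x, is bijective. -/

import Mathlib

/-!
As an `A`-module, `σ = R ⊗_A σ₀` is `Λ →₀ σ₀`, and `End_{A[M]}(σ₀) ⊗_A R` is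
`Λ →₀ End_{A[M]}(σ₀)`. An `R[M]`-endomorphism `φ` of `σ` is `R`-linear, hence determined by
the coefficients `φ_l(v)` of `φ (1 ⊗ v)`. Since the twist of the action of `m` by `π m` is an
`R`-scalar, `φ` also commutes with the untwisted action, so each `φ_l` is `A[M]`-linear. On a
pure tensor `ψ ⊗ y` the family `(φ_l)` is `l ↦ (coefficient of y at l) • ψ`, which gives
injectivity; when `σ₀` is finitely generated, `l ↦ φ_l` vanishes off the finitely many `l`
seen by the generators, which gives surjectivity.
-/

open TensorProduct

section

variable {A : Type*} [CommRing A] {M : Type*} [Group M]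
variable {Λ : Type*} [CommGroup Λ]
variable {V : Type*} [AddCommGroup V] [Module A V] [Module (MonoidAlgebra A M) V]
  [IsScalarTower A (MonoidAlgebra A M) V]

/-- The action of `m : M` on an `A[M]`-module as an `A`-linear endomorphism. -/
noncomputable def mAct (m : M) : V →ₗ[A] V where
  toFun v := MonoidAlgebra.of A M m • v
  map_add' _ _ := smul_add _ _ _
  map_smul' a v := smul_comm (MonoidAlgebra.of A M m) a v

lemma mAct_one : mAct (A := A) (M := M) (V := V) 1 = LinearMap.id := by
  ext v
  show MonoidAlgebra.of A M 1 • v = v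
  rw [map_one, one_smul]

lemma mAct_mul (m n : M) :
    mAct (A := A) (M := M) (V := V) (m * n)
      = (mAct (A := A) (V := V) m) ∘ₗ (mAct (A := A) (V := V) n) := by
  ext v
  show MonoidAlgebra.of A M (m * n) • v = MonoidAlgebra.of A M m • (MonoidAlgebra.of A M n • v)
  rw [map_mul, mul_smul]

variable (π : M →* Λ)

/-- The twisted representation of `M` on `σ = σ₀ ⊗_A R`, `R = A[Λ]`: the element `m`
acts by `v ⊗ x ↦ (m • v) ⊗ ((π m)·x)`. -/
noncomputable def twistRep :
    M →* Module.End (MonoidAlgebra A Λ) ((MonoidAlgebra A Λ) ⊗[A] V) where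
  toFun m := MonoidAlgebra.of A Λ (π m) •
    LinearMap.baseChange (MonoidAlgebra A Λ) (mAct (A := A) (V := V) m)
  map_one' := by
    show MonoidAlgebra.of A Λ (π 1) •
      LinearMap.baseChange (MonoidAlgebra A Λ) (mAct (A := A) (V := V) 1) = 1
    rw [map_one, map_one, one_smul, mAct_one]
    exact LinearMap.baseChange_id
  map_mul' m n := by
    show MonoidAlgebra.of A Λ (π (m * n)) •
      LinearMap.baseChange (MonoidAlgebra A Λ) (mAct (A := A) (V := V) (m * n)) = _
    rw [map_mul, map_mul, mAct_mul, LinearMap.baseChange_comp,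
      ← Module.End.mul_eq_comp]
    exact (smul_mul_smul_comm _ _ _ _).symm

/-- The `R[M]`-module structure on `σ = σ₀ ⊗_A R` (`R = A[Λ]`), where `R` acts on the
right tensor factor and `m ∈ M` acts by `v ⊗ x ↦ (m • v) ⊗ ((π m)·x)`. -/
noncomputable def twistModule :
    Module (MonoidAlgebra (MonoidAlgebra A Λ) M) ((MonoidAlgebra A Λ) ⊗[A] V) :=
  Module.compHom ((MonoidAlgebra A Λ) ⊗[A] V)
    ((MonoidAlgebra.lift (MonoidAlgebra A Λ)
      (Module.End (MonoidAlgebra A Λ) ((MonoidAlgebra A Λ) ⊗[A] V)) M)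
      (twistRep (A := A) (V := V) π)).toRingHom

lemma twist_smul_def (s : MonoidAlgebra (MonoidAlgebra A Λ) M)
    (y : (MonoidAlgebra A Λ) ⊗[A] V) :
    letI := twistModule (A := A) (V := V) π
    s • y = ((MonoidAlgebra.lift (MonoidAlgebra A Λ)
      (Module.End (MonoidAlgebra A Λ) ((MonoidAlgebra A Λ) ⊗[A] V)) M)
      (twistRep (A := A) (V := V) π) s) y := rfl

lemma restrict_comm (ψ : V →ₗ[MonoidAlgebra A M] V) (m : M) :
    (LinearMap.restrictScalars A ψ) ∘ₗ (mAct (A := A) (V := V) m)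
      = (mAct (A := A) (V := V) m) ∘ₗ (LinearMap.restrictScalars A ψ) := by
  ext v
  show ψ (MonoidAlgebra.of A M m • v) = MonoidAlgebra.of A M m • ψ v
  exact map_smul ψ _ v

lemma twist_equivariant (ψ : V →ₗ[MonoidAlgebra A M] V)
    (s : MonoidAlgebra (MonoidAlgebra A Λ) M) (x : (MonoidAlgebra A Λ) ⊗[A] V) :
    letI := twistModule (A := A) (V := V) π
    LinearMap.baseChange (MonoidAlgebra A Λ) (LinearMap.restrictScalars A ψ) (s • x)
      = s • (LinearMap.baseChange (MonoidAlgebra A Λ)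
          (LinearMap.restrictScalars A ψ) x) := by
  letI := twistModule (A := A) (V := V) π
  rw [twist_smul_def, twist_smul_def]
  induction s using MonoidAlgebra.induction_on with
  | of m =>
      rw [MonoidAlgebra.lift_of]
      show LinearMap.baseChange (MonoidAlgebra A Λ) (LinearMap.restrictScalars A ψ)
          ((MonoidAlgebra.of A Λ (π m) •
            LinearMap.baseChange (MonoidAlgebra A Λ) (mAct (A := A) (V := V) m)) x)
        = (MonoidAlgebra.of A Λ (π m) •
            LinearMap.baseChange (MonoidAlgebra A Λ) (mAct (A := A) (V := V) m))
          (LinearMap.baseChange (MonoidAlgebra A Λ) (LinearMap.restrictScalars A ψ) x)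
      rw [LinearMap.smul_apply, LinearMap.smul_apply, map_smul]
      congr 1
      show (LinearMap.baseChange (MonoidAlgebra A Λ) (LinearMap.restrictScalars A ψ) ∘ₗ
        LinearMap.baseChange (MonoidAlgebra A Λ) (mAct (A := A) (V := V) m)) x
        = (LinearMap.baseChange (MonoidAlgebra A Λ) (mAct (A := A) (V := V) m) ∘ₗ
          LinearMap.baseChange (MonoidAlgebra A Λ) (LinearMap.restrictScalars A ψ)) x
      rw [← LinearMap.baseChange_comp, ← LinearMap.baseChange_comp, restrict_comm]
  | add f g hf hg =>
      rw [map_add, LinearMap.add_apply, LinearMap.add_apply, map_add, hf, hg]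
  | smul r f hf =>
      rw [map_smul, LinearMap.smul_apply, LinearMap.smul_apply, map_smul, hf]


/-- `ψ ⊗ y` induces an `R[M]`-linear endomorphism of `σ = σ₀ ⊗_A R`, determined by
`v ⊗ x ↦ ψ(v) ⊗ y·x`. -/
noncomputable def pairMapTwist (ψ : V →ₗ[MonoidAlgebra A M] V) (y : MonoidAlgebra A Λ) :
    letI := twistModule (A := A) (V := V) π
    ((MonoidAlgebra A Λ) ⊗[A] V) →ₗ[MonoidAlgebra (MonoidAlgebra A Λ) M]
      ((MonoidAlgebra A Λ) ⊗[A] V) :=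
  letI := twistModule (A := A) (V := V) π
  { toFun := fun x =>
      y • (LinearMap.baseChange (MonoidAlgebra A Λ) (LinearMap.restrictScalars A ψ) x)
    map_add' := fun x z => by
      show y • _ = y • _ + y • _
      rw [map_add, smul_add]
    map_smul' := fun s x => by
      simp only [RingHom.id_apply]
      rw [twist_equivariant, twist_smul_def, twist_smul_def, map_smul] }

lemma pairMapTwist_apply (ψ : V →ₗ[MonoidAlgebra A M] V) (y : MonoidAlgebra A Λ)
    (x : (MonoidAlgebra A Λ) ⊗[A] V) :
    pairMapTwist (A := A) (V := V) π ψ y x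
      = y • (LinearMap.baseChange (MonoidAlgebra A Λ)
          (LinearMap.restrictScalars A ψ) x) := rfl

/-- The natural map `End_{A[M]}(σ₀) ⊗_A R → End_{R[M]}(σ)`, sending `ψ ⊗ y` to the
endomorphism determined by `v ⊗ x ↦ ψ(v) ⊗ y·x`. -/
noncomputable def natTwistHom :
    ((V →ₗ[MonoidAlgebra A M] V) ⊗[A] (MonoidAlgebra A Λ)) →+
      (letI := twistModule (A := A) (V := V) π
       ((MonoidAlgebra A Λ) ⊗[A] V) →ₗ[MonoidAlgebra (MonoidAlgebra A Λ) M]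
        ((MonoidAlgebra A Λ) ⊗[A] V)) :=
  letI := twistModule (A := A) (V := V) π
  TensorProduct.liftAddHom
    { toFun := fun ψ =>
        { toFun := fun y => pairMapTwist (A := A) (V := V) π ψ y
          map_zero' := LinearMap.ext fun x => by
            rw [pairMapTwist_apply, zero_smul]; rfl
          map_add' := fun y y' => LinearMap.ext fun x => by
            rw [pairMapTwist_apply, add_smul]; rfl }
      map_zero' := AddMonoidHom.ext fun y => LinearMap.ext fun x => by
        show pairMapTwist (A := A) (V := V) π 0 y x = 0
        rw [pairMapTwist_apply, LinearMap.restrictScalars_zero]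
        simp
      map_add' := fun ψ χ => AddMonoidHom.ext fun y => LinearMap.ext fun x => by
        show pairMapTwist (A := A) (V := V) π (ψ + χ) y x
          = pairMapTwist (A := A) (V := V) π ψ y x + pairMapTwist (A := A) (V := V) π χ y x
        rw [pairMapTwist_apply, pairMapTwist_apply, pairMapTwist_apply,
          LinearMap.restrictScalars_add, LinearMap.baseChange_add,
          LinearMap.add_apply, smul_add] }
    (fun a ψ y => LinearMap.ext fun x => by
      show pairMapTwist (A := A) (V := V) π (a • ψ) y x
        = pairMapTwist (A := A) (V := V) π ψ (a • y) x
      rw [pairMapTwist_apply, pairMapTwist_apply, LinearMap.restrictScalars_smul,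
        LinearMap.baseChange_smul, LinearMap.smul_apply, smul_comm y a, smul_assoc])

local notation "R" => MonoidAlgebra A Λ
local notation "σ" => MonoidAlgebra A Λ ⊗[A] V

noncomputable def MonoidAlgebra.tensorEquivFinsuppLeft (S ι N : Type*) [CommSemiring S]
    [AddCommMonoid N] [Module S N] [DecidableEq ι] : MonoidAlgebra S ι ⊗[S] N ≃ₗ[S] (ι →₀ N) :=
  (LinearEquiv.rTensor N (MonoidAlgebra.coeffLinearEquiv S)).trans
    (TensorProduct.finsuppScalarLeft S N ι)

noncomputable def MonoidAlgebra.tensorEquivFinsuppRight (S ι N : Type*) [CommSemiring S]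
    [AddCommMonoid N] [Module S N] [DecidableEq ι] : N ⊗[S] MonoidAlgebra S ι ≃ₗ[S] (ι →₀ N) :=
  (LinearEquiv.lTensor N (MonoidAlgebra.coeffLinearEquiv S)).trans
    (TensorProduct.finsuppScalarRight S S N ι)

@[simp]
lemma MonoidAlgebra.tensorEquivFinsuppLeft_tmul_apply {S ι N : Type*} [CommSemiring S]
    [AddCommMonoid N] [Module S N] [DecidableEq ι] (p : MonoidAlgebra S ι) (n : N) (i : ι) :
    MonoidAlgebra.tensorEquivFinsuppLeft S ι N (p ⊗ₜ n) i = p.coeff i • n := by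
  simp [MonoidAlgebra.tensorEquivFinsuppLeft]

@[simp]
lemma MonoidAlgebra.tensorEquivFinsuppRight_tmul_apply {S ι N : Type*} [CommSemiring S]
    [AddCommMonoid N] [Module S N] [DecidableEq ι] (n : N) (p : MonoidAlgebra S ι) (i : ι) :
    MonoidAlgebra.tensorEquivFinsuppRight S ι N (n ⊗ₜ p) i = p.coeff i • n := by
  simp [MonoidAlgebra.tensorEquivFinsuppRight]

lemma MonoidAlgebra.tensorEquivFinsuppLeft_baseChange_apply {S ι N : Type*} [CommRing S]
    [Monoid ι] [AddCommGroup N] [Module S N] [DecidableEq ι] (f : N →ₗ[S] N)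
    (x : MonoidAlgebra S ι ⊗[S] N) (i : ι) :
    MonoidAlgebra.tensorEquivFinsuppLeft S ι N (f.baseChange (MonoidAlgebra S ι) x) i
      = f (MonoidAlgebra.tensorEquivFinsuppLeft S ι N x i) := by
  induction x using TensorProduct.induction_on with
  | zero => simp
  | tmul p n => simp
  | add x y hx hy => simp [hx, hy]

lemma twistModule_single_one_smul (r : R) (x : σ) :
    letI := twistModule (A := A) (V := V) π
    (MonoidAlgebra.single (1 : M) r : MonoidAlgebra R M) • x = r • x := by
  rw [twist_smul_def, MonoidAlgebra.lift_single, map_one]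
  simp

lemma twistModule_isScalarTower :
    letI := twistModule (A := A) (V := V) π
    IsScalarTower R (MonoidAlgebra R M) σ :=
  letI := twistModule (A := A) (V := V) π
  IsScalarTower.of_algebraMap_smul (twistModule_single_one_smul π)

lemma twistModule_of_smul (m : M) (x : σ) :
    letI := twistModule (A := A) (V := V) π
    MonoidAlgebra.of R M m • x
      = MonoidAlgebra.of A Λ (π m) • (mAct (A := A) (V := V) m).baseChange R x := by
  rw [twist_smul_def, MonoidAlgebra.lift_of]
  rfl

lemma map_baseChange_mAct
    (φ : letI := twistModule (A := A) (V := V) π; σ →ₗ[MonoidAlgebra R M] σ)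
    (m : M) (x : σ) :
    φ ((mAct (A := A) (V := V) m).baseChange R x)
      = (mAct (A := A) (V := V) m).baseChange R (φ x) := by
  let _ := twistModule (A := A) (V := V) π
  have := twistModule_isScalarTower (A := A) (V := V) π
  have untwist : ∀ y : σ, (mAct (A := A) (V := V) m).baseChange R y
      = MonoidAlgebra.of A Λ (π m)⁻¹ • MonoidAlgebra.of R M m • y := by
    intro y
    rw [twistModule_of_smul, smul_smul, ← map_mul, inv_mul_cancel, map_one, one_smul]
  rw [untwist, untwist, ← map_smul, ← LinearMap.restrictScalars_apply R, map_smul,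
    LinearMap.restrictScalars_apply]

open scoped Classical in
noncomputable def twistComponent
    (φ : letI := twistModule (A := A) (V := V) π; σ →ₗ[MonoidAlgebra R M] σ) (l : Λ) :
    V →ₗ[MonoidAlgebra A M] V :=
  letI := twistModule (A := A) (V := V) π
  haveI := twistModule_isScalarTower (A := A) (V := V) π
  MonoidAlgebra.equivariantOfLinearOfComm
    (Finsupp.lapply l ∘ₗ (MonoidAlgebra.tensorEquivFinsuppLeft A Λ V).toLinearMap ∘ₗ
      (LinearMap.liftBaseChangeEquiv R).symm (φ.restrictScalars R))
    fun m v => by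
      have h : φ (1 ⊗ₜ (MonoidAlgebra.of A M m • v)) = _ := map_baseChange_mAct π φ m (1 ⊗ₜ v)
      simp only [LinearMap.comp_apply, LinearMap.liftBaseChangeEquiv_symm_apply,
        LinearMap.restrictScalars_apply, LinearEquiv.coe_coe, Finsupp.lapply_apply]
      rw [← MonoidAlgebra.of_apply, h, MonoidAlgebra.tensorEquivFinsuppLeft_baseChange_apply]
      rfl

open scoped Classical in
lemma twistComponent_apply
    (φ : letI := twistModule (A := A) (V := V) π; σ →ₗ[MonoidAlgebra R M] σ) (l : Λ) (v : V) :
    twistComponent π φ l v = MonoidAlgebra.tensorEquivFinsuppLeft A Λ V (φ (1 ⊗ₜ v)) l :=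
  rfl

lemma twistComponent_injective : Function.Injective (twistComponent (A := A) (V := V) π) := by
  classical
  let _ := twistModule (A := A) (V := V) π
  have := twistModule_isScalarTower (A := A) (V := V) π
  intro φ φ' h
  have on_one_tmul : ∀ v : V, φ (1 ⊗ₜ v) = φ' (1 ⊗ₜ v) := fun v =>
    (MonoidAlgebra.tensorEquivFinsuppLeft A Λ V).injective <| Finsupp.ext fun l => by
      simpa only [twistComponent_apply] using LinearMap.congr_fun (congr_fun h l) v
  have : φ.restrictScalars R = φ'.restrictScalars R :=
    (LinearMap.liftBaseChangeEquiv R).symm.injective (LinearMap.ext on_one_tmul)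
  exact LinearMap.restrictScalars_injective R this

lemma natTwistHom_tmul (ψ : V →ₗ[MonoidAlgebra A M] V) (y : R) :
    natTwistHom (A := A) (V := V) π (ψ ⊗ₜ y) = pairMapTwist π ψ y :=
  TensorProduct.liftAddHom_tmul _ _ _ _

open scoped Classical in
lemma twistComponent_natTwistHom (t : (V →ₗ[MonoidAlgebra A M] V) ⊗[A] R) :
    twistComponent π (natTwistHom π t) = ⇑(MonoidAlgebra.tensorEquivFinsuppRight A Λ _ t) := by
  funext l
  ext v
  induction t using TensorProduct.induction_on with
  | zero => simp [twistComponent_apply]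
  | tmul ψ y =>
    rw [twistComponent_apply, natTwistHom_tmul, pairMapTwist_apply, LinearMap.baseChange_tmul,
      TensorProduct.smul_tmul', smul_eq_mul, mul_one]
    simp
  | add t t' ht ht' =>
    simp only [map_add, Finsupp.add_apply, LinearMap.add_apply, ← ht, ← ht', twistComponent_apply]

lemma finite_support_twistComponent [Module.Finite (MonoidAlgebra A M) V]
    (φ : letI := twistModule (A := A) (V := V) π; σ →ₗ[MonoidAlgebra R M] σ) :
    (Function.support (twistComponent π φ)).Finite := by
  classical
  obtain ⟨s, hs⟩ := Module.finite_def.mp ‹Module.Finite (MonoidAlgebra A M) V›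
  refine (s.finite_toSet.biUnion fun v _ =>
    (MonoidAlgebra.tensorEquivFinsuppLeft A Λ V (φ (1 ⊗ₜ v))).hasFiniteSupport).subset ?_
  intro l hl
  contrapose! hl
  simp only [Set.mem_iUnion, Function.mem_support, not_exists, not_not] at hl
  rw [Function.notMem_support]
  exact LinearMap.ext_on hs fun v hv => by
    rw [twistComponent_apply, LinearMap.zero_apply]
    exact hl v hv

/-- The isomorphism `End_{A[M]}(σ₀) ⊗_A R ≅ End_{R[M]}(σ)` established in Section 5:
if `σ₀` is a finitely generated `A[M]`-module and `σ = σ₀ ⊗_A R` is its universal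
unramified twist along `π : M → Λ` (`R = A[Λ]`), then the natural map sending `ψ ⊗ y`
to the endomorphism determined by `v ⊗ x ↦ ψ(v) ⊗ y·x` is bijective. -/
theorem natTwistHom_bijective [Module.Finite (MonoidAlgebra A M) V] :
    Function.Bijective ⇑(natTwistHom (A := A) (V := V) π) := by
  classical
  set e := MonoidAlgebra.tensorEquivFinsuppRight A Λ (V →ₗ[MonoidAlgebra A M] V)
  refine ⟨fun t t' h => e.injective <| DFunLike.coe_injective ?_, fun φ => ?_⟩
  · rw [← twistComponent_natTwistHom, ← twistComponent_natTwistHom, h]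
  · refine ⟨e.symm (Finsupp.ofSupportFinite _ (finite_support_twistComponent π φ)),
      twistComponent_injective π ?_⟩
    rw [twistComponent_natTwistHom, LinearEquiv.apply_symm_apply, Finsupp.ofSupportFinite_coe]

end
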